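/- Let D ⊆ ℝ² be a bounded open set, let u₊, u₋ > 0, let r : ℝ → ℝ be 2π-periodic and Lipschitz continuous, let x₀ ∈ D, let (r_k)_{k≥1} be a sequence of continuous 2π-periodic functions on ℝ with ‖r_k − r‖_∞ → 0, and let (x₀^k)_{k≥1} ⊆ D be a sequence of points with |x₀^k − x₀| → 0 as k → ∞. Then F₂(r_k, x₀^k) converges to F₂(r, x₀) in Lebesgue measure on D, i.e. for every δ > 0 the Lebesgue measure of {x ∈ D : |F₂(r_k, x₀^k)(x) − F₂(r, x₀)(x)| > δ} tends to 0 as k → ∞. -/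

import Mathlib

open MeasureTheory Filter

/-- The angular polar coordinate of a point in the plane (the argument of the
corresponding complex number, taking values in `(-π, π]`). -/
noncomputable def polarAngle (x : EuclideanSpace ℝ (Fin 2)) : ℝ :=
  Complex.arg ⟨x 0, x 1⟩

/-- The star-shaped inclusion `A(r, x₀) = {x ∈ D : |x − x₀| ≤ r(h(x − x₀))}`. -/
def starSet (D : Set (EuclideanSpace ℝ (Fin 2))) (r : ℝ → ℝ)
    (x₀ : EuclideanSpace ℝ (Fin 2)) : Set (EuclideanSpace ℝ (Fin 2)) :=
  {x | x ∈ D ∧ ‖x - x₀‖ ≤ r (polarAngle (x - x₀))}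

/-- The star-shaped conductivity `F₂(r, x₀) = (u₊ − u₋)·𝟙_{A(r,x₀)} + u₋`. -/
noncomputable def starF (D : Set (EuclideanSpace ℝ (Fin 2))) (uplus uminus : ℝ)
    (r : ℝ → ℝ) (x₀ : EuclideanSpace ℝ (Fin 2)) (x : EuclideanSpace ℝ (Fin 2)) : ℝ :=
  (uplus - uminus) * (starSet D r x₀).indicator (fun _ => (1 : ℝ)) x + uminus

/-!
Off a Lebesgue-null set every point `x` eventually lies on the same side of the moving
boundaries `‖x - x₀ᵏ‖ = rₖ(h(x - x₀ᵏ))` as of the limit boundary, so `F₂(rₖ, x₀ᵏ) → F₂(r, x₀)`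
pointwise almost everywhere, and on the finite-measure set `D` this gives convergence in measure.
The exceptional set is the centre together with the limit boundary curve; the curve is null because
it is the image of the graph `{(ρ, θ) | ρ = r θ}` (null by Fubini) under the smooth polar map.
Pointwise convergence uses that `r ∘ h` is continuous away from the centre: periodicity lets `r`
factor through `ℝ ⧸ 2πℤ`, where the argument is continuous.
-/

open Set
open scoped ENNReal Topology

theorem volume_setOf_fst_eq_eq_zero {r : ℝ → ℝ} (hr : Measurable r) :
    volume {p : ℝ × ℝ | p.1 = r p.2} = 0 := by
  have hs : MeasurableSet {p : ℝ × ℝ | p.1 = r p.2} :=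
    measurableSet_eq_fun measurable_fst (hr.comp measurable_snd)
  rw [Measure.volume_eq_prod, Measure.prod_apply_symm hs]
  simp

theorem Complex.volume_setOf_norm_eq_comp_arg {r : ℝ → ℝ} (hr : Measurable r) :
    volume {z : ℂ | ‖z‖ = r z.arg} = 0 := by
  have hsub : {z : ℂ | ‖z‖ = r z.arg} ⊆
      measurableEquivRealProd.symm '' (polarCoord.symm '' {p : ℝ × ℝ | p.1 = r p.2}) := by
    intro z hz
    refine ⟨_, ⟨(‖z‖, z.arg), hz, rfl⟩, ?_⟩
    rw [measurableEquivRealProd_symm_polarCoord_symm_apply, Complex.polarCoord_symm_apply]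
    simp
  refine measure_mono_null hsub ?_
  rw [MeasurableEquiv.image_symm, volume_preserving_equiv_real_prod.measure_preimage_equiv]
  exact addHaar_image_eq_zero_of_differentiableOn_of_addHaar_eq_zero volume
    (fun p _ => (hasFDerivAt_polarCoord_symm p).differentiableAt.differentiableWithinAt)
    (volume_setOf_fst_eq_eq_zero hr)

theorem polarAngle_eq_arg (x : EuclideanSpace ℝ (Fin 2)) :
    polarAngle x = (Complex.orthonormalBasisOneI.repr.symm x).arg := by
  rw [polarAngle, Complex.orthonormalBasisOneI_repr_symm_apply, Complex.mk_eq_add_mul_I]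

theorem measurable_polarAngle : Measurable polarAngle := by
  simp only [funext polarAngle_eq_arg]
  exact Complex.measurable_arg.comp Complex.orthonormalBasisOneI.repr.symm.continuous.measurable

theorem Function.Periodic.continuousAt_comp_polarAngle {r : ℝ → ℝ} (hr : Continuous r)
    (hp : Function.Periodic r (2 * Real.pi)) {x : EuclideanSpace ℝ (Fin 2)} (hx : x ≠ 0) :
    ContinuousAt (r ∘ polarAngle) x := by
  set e := Complex.orthonormalBasisOneI.repr.symm
  have hlift : r ∘ polarAngle = hp.lift ∘ ((↑) ∘ Complex.arg : ℂ → Real.Angle) ∘ e := by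
    funext y
    rw [Function.comp_apply, polarAngle_eq_arg]
    rfl
  rw [hlift]
  exact (hr.quotient_liftOn' _).continuousAt.comp <|
    (Complex.continuousAt_arg_coe_angle (e.map_ne_zero_iff.2 hx)).comp e.continuous.continuousAt

theorem volume_setOf_norm_sub_eq_comp_polarAngle {r : ℝ → ℝ} (hr : Measurable r)
    (c : EuclideanSpace ℝ (Fin 2)) :
    volume {x : EuclideanSpace ℝ (Fin 2) | ‖x - c‖ = r (polarAngle (x - c))} = 0 := by
  let e := Complex.orthonormalBasisOneI.repr.symm
  have hpre : {x : EuclideanSpace ℝ (Fin 2) | ‖x - c‖ = r (polarAngle (x - c))} =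
      (· + -c) ⁻¹' (e ⁻¹' {z : ℂ | ‖z‖ = r z.arg}) := by
    ext x
    simp only [mem_ofPred_eq, mem_preimage, polarAngle_eq_arg, ← sub_eq_add_neg, e,
      LinearIsometryEquiv.norm_map]
  rw [hpre, measure_preimage_add_right,
    e.measurePreserving.measure_preimage_emb e.toHomeomorph.measurableEmbedding]
  exact Complex.volume_setOf_norm_eq_comp_arg hr

theorem Filter.Tendsto.eventually_nonpos_iff {ι : Type*} {l : Filter ι} {f : ι → ℝ} {a : ℝ}
    (hf : Tendsto f l (𝓝 a)) (ha : a ≠ 0) : ∀ᶠ k in l, (f k ≤ 0 ↔ a ≤ 0) := by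
  rcases ha.lt_or_gt with hneg | hpos
  · filter_upwards [hf.eventually_lt_const hneg] with k hk
    exact iff_of_true hk.le hneg.le
  · filter_upwards [hf.eventually_const_lt hpos] with k hk
    exact iff_of_false hk.not_ge hpos.not_ge

theorem measurable_starF {D : Set (EuclideanSpace ℝ (Fin 2))} (hD : MeasurableSet D)
    (uplus uminus : ℝ) {r : ℝ → ℝ} (hr : Measurable r) (c : EuclideanSpace ℝ (Fin 2)) :
    Measurable (starF D uplus uminus r c) := by
  have hsub : Measurable fun x : EuclideanSpace ℝ (Fin 2) => x - c := by fun_prop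
  have hset : MeasurableSet (starSet D r c) :=
    hD.inter (measurableSet_le hsub.norm (hr.comp (measurable_polarAngle.comp hsub)))
  exact (measurable_const.mul (measurable_const.indicator hset)).add measurable_const

section Convergence

variable {D : Set (EuclideanSpace ℝ (Fin 2))} {r : ℝ → ℝ} {rk : ℕ → ℝ → ℝ}
  {c x : EuclideanSpace ℝ (Fin 2)} {ck : ℕ → EuclideanSpace ℝ (Fin 2)}

theorem eventually_mem_starSet_iff (hr : Continuous r) (hp : Function.Periodic r (2 * Real.pi))
    (hrk : TendstoUniformly rk r atTop) (hck : Tendsto ck atTop (𝓝 c)) (hxc : x ≠ c)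
    (hx : ‖x - c‖ ≠ r (polarAngle (x - c))) :
    ∀ᶠ k in atTop, (x ∈ starSet D (rk k) (ck k) ↔ x ∈ starSet D r c) := by
  have hshift : Tendsto (fun k => x - ck k) atTop (𝓝 (x - c)) := tendsto_const_nhds.sub hck
  have hradius : Tendsto (fun k => rk k (polarAngle (x - ck k))) atTop
      (𝓝 (r (polarAngle (x - c)))) :=
    (hrk.comp polarAngle).tendsto_comp
      (hp.continuousAt_comp_polarAngle hr (sub_ne_zero.2 hxc)) hshift
  filter_upwards [(hshift.norm.sub hradius).eventually_nonpos_iff (sub_ne_zero.2 hx)] with k hk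
  exact and_congr_right' (by simpa only [sub_nonpos] using hk)

theorem tendsto_starF_apply (uplus uminus : ℝ) (hr : Continuous r)
    (hp : Function.Periodic r (2 * Real.pi)) (hrk : TendstoUniformly rk r atTop)
    (hck : Tendsto ck atTop (𝓝 c)) (hxc : x ≠ c) (hx : ‖x - c‖ ≠ r (polarAngle (x - c))) :
    Tendsto (fun k => starF D uplus uminus (rk k) (ck k) x) atTop
      (𝓝 (starF D uplus uminus r c x)) := by
  refine tendsto_nhds_of_eventually_eq ?_
  filter_upwards [eventually_mem_starSet_iff (D := D) hr hp hrk hck hxc hx] with k hk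
  unfold starF
  congr 2
  exact indicator_eq_indicator hk rfl

end Convergence

theorem tendsto_measure_inter_lt_abs_sub {α : Type*} [MeasurableSpace α] {μ : Measure α}
    {D : Set α} (hD : μ D ≠ ∞) {f : ℕ → α → ℝ} {g : α → ℝ}
    (hf : ∀ k, AEStronglyMeasurable (f k) (μ.restrict D))
    (hfg : ∀ᵐ x ∂μ.restrict D, Tendsto (fun k => f k x) atTop (𝓝 (g x))) {δ : ℝ} (hδ : 0 < δ) :
    Tendsto (fun k => μ {x | x ∈ D ∧ δ < |f k x - g x|}) atTop (𝓝 0) := by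
  have := isFiniteMeasure_restrict.2 hD
  refine tendsto_of_tendsto_of_tendsto_of_le_of_le tendsto_const_nhds
    (tendstoInMeasure_of_tendsto_ae hf hfg (ENNReal.ofReal δ) (by positivity))
    (fun _ => bot_le) fun k => ?_
  have hsub : {x | x ∈ D ∧ δ < |f k x - g x|} ⊆
      {x | ENNReal.ofReal δ ≤ edist (f k x) (g x)} ∩ D := fun x hx =>
    ⟨by simpa only [mem_ofPred_eq, edist_dist, Real.dist_eq] using ENNReal.ofReal_le_ofReal hx.2.le,
      hx.1⟩
  exact (measure_mono hsub).trans (Measure.le_restrict_apply _ _)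

theorem stmt6_general (D : Set (EuclideanSpace ℝ (Fin 2))) (hDopen : IsOpen D)
    (hDbdd : Bornology.IsBounded D)
    (uplus uminus : ℝ)
    (r : ℝ → ℝ) (hrper : Function.Periodic r (2 * Real.pi))
    (K : NNReal) (hrlip : LipschitzWith K r)
    (x₀ : EuclideanSpace ℝ (Fin 2))
    (rk : ℕ → ℝ → ℝ) (hrk : ∀ k, Continuous (rk k))
    (hrconv : TendstoUniformly rk r atTop)
    (x₀k : ℕ → EuclideanSpace ℝ (Fin 2))
    (hxconv : Tendsto x₀k atTop (nhds x₀)) :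
    ∀ δ > (0 : ℝ),
      Tendsto
        (fun k => volume {x | x ∈ D ∧
          δ < |starF D uplus uminus (rk k) (x₀k k) x - starF D uplus uminus r x₀ x|})
        atTop (nhds 0) := by
  intro δ hδ
  have hboundary := measure_eq_zero_iff_ae_notMem.1
    (volume_setOf_norm_sub_eq_comp_polarAngle hrlip.continuous.measurable x₀)
  refine tendsto_measure_inter_lt_abs_sub hDbdd.measure_lt_top.ne
    (fun k => (measurable_starF hDopen.measurableSet _ _ (hrk k).measurable _).aestronglyMeasurable)
    (ae_restrict_of_ae ?_) hδ
  filter_upwards [volume.ae_ne x₀, hboundary] with x hxc hx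
  exact tendsto_starF_apply uplus uminus hrlip.continuous hrper hrconv hxconv hxc hx

theorem stmt6 (D : Set (EuclideanSpace ℝ (Fin 2))) (hDopen : IsOpen D)
    (hDbdd : Bornology.IsBounded D)
    (uplus uminus : ℝ) (huplus : 0 < uplus) (huminus : 0 < uminus)
    (r : ℝ → ℝ) (hrper : Function.Periodic r (2 * Real.pi))
    (K : NNReal) (hrlip : LipschitzWith K r)
    (x₀ : EuclideanSpace ℝ (Fin 2)) (hx₀ : x₀ ∈ D)
    (rk : ℕ → ℝ → ℝ) (hrk : ∀ k, Continuous (rk k))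
    (hrkper : ∀ k, Function.Periodic (rk k) (2 * Real.pi))
    (hrconv : TendstoUniformly rk r atTop)
    (x₀k : ℕ → EuclideanSpace ℝ (Fin 2)) (hx₀k : ∀ k, x₀k k ∈ D)
    (hxconv : Tendsto x₀k atTop (nhds x₀)) :
    ∀ δ > (0 : ℝ),
      Tendsto
        (fun k => volume {x | x ∈ D ∧
          δ < |starF D uplus uminus (rk k) (x₀k k) x - starF D uplus uminus r x₀ x|})
        atTop (nhds 0) :=
  stmt6_general D hDopen hDbdd uplus uminus r hrper K hrlip x₀ rk hrk hrconv x₀k hxconv
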